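/- For all indices 1 ≤ i < j < k ≤ n, in the presented group G one has p_{ij} x_{ik} p_{ij}^{-1} x_{ij} =_R p_{jk}^{-1} x_{ij} x_{ik} p_{jk}. -/

import Mathlib

namespace PureHilden

/-- The three symbols `p`, `x`, `y`. -/
inductive Sym : Type
  | p | x | y
  deriving DecidableEq

open Sym

/-- Generators of the free group `F`:  `p_{ij}, x_{ij}, y_{ij}` for `1 ≤ i < j ≤ n`
and `t_k` for `1 ≤ k ≤ n`. -/
inductive Gen (n : ℕ) : Type
  | pair (s : Sym) (i j : ℕ) (h : 1 ≤ i ∧ i < j ∧ j ≤ n) : Gen n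
  | t (k : ℕ) (h : 1 ≤ k ∧ k ≤ n) : Gen n

/-- The free group `F` on the set `S`. -/
abbrev FG (n : ℕ) := FreeGroup (Gen n)

/-- `α_{ij}` (symmetrised: `α_{ji} = α_{ij}`); junk value `1` for invalid indices. -/
def gsym (n : ℕ) (s : Sym) (i j : ℕ) : FG n :=
  if h : 1 ≤ min i j ∧ min i j < max i j ∧ max i j ≤ n then
    FreeGroup.of (Gen.pair s (min i j) (max i j) h)
  else 1

def P (n i j : ℕ) : FG n := gsym n Sym.p i j
def X (n i j : ℕ) : FG n := gsym n Sym.x i j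
def Y (n i j : ℕ) : FG n := gsym n Sym.y i j

def T (n k : ℕ) : FG n :=
  if h : 1 ≤ k ∧ k ≤ n then FreeGroup.of (Gen.t k h) else 1

/-- `1 ≤ k ≤ n`. -/
def Idx (n k : ℕ) : Prop := 1 ≤ k ∧ k ≤ n

/-- `1 ≤ i < j ≤ n`. -/
def Idx2 (n i j : ℕ) : Prop := 1 ≤ i ∧ i < j ∧ j ≤ n

/-- `(i,j,k)` is a cyclic rotation of a strictly increasing triple. -/
def cyc3 (i j k : ℕ) : Prop := (i < j ∧ j < k) ∨ (j < k ∧ k < i) ∨ (k < i ∧ i < j)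

/-- `(i,j,k,l)` is a cyclic rotation of a strictly increasing quadruple. -/
def cyc4 (i j k l : ℕ) : Prop :=
  (i < j ∧ j < k ∧ k < l) ∨ (j < k ∧ k < l ∧ l < i) ∨
  (k < l ∧ l < i ∧ i < j) ∨ (l < i ∧ i < j ∧ j < k)

def c2A : List (Sym × Sym × Sym) :=
  [(p,p,p),(p,y,y),(x,p,p),(x,x,p),(x,y,y),(y,p,p),(y,p,x),(y,y,y)]
def c2B : List (Sym × Sym × Sym) :=
  [(p,p,p),(p,x,y),(x,p,p),(x,p,x),(x,x,y),(y,p,p),(y,x,y),(y,y,p)]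
def c2C : List (Sym × Sym × Sym) :=
  [(p,p,p),(p,x,x),(x,p,p),(x,x,x),(x,y,p),(y,p,p),(y,p,y),(y,x,x)]

/-- The allowed triples `(α,β,γ)` for relation (C2), by cyclic ordering of `(i,j,k)`. -/
def C2ok (i j k : ℕ) (a b c : Sym) : Prop :=
  (i < j ∧ j < k ∧ (a,b,c) ∈ c2A) ∨
  (j < k ∧ k < i ∧ (a,b,c) ∈ c2B) ∨
  (k < i ∧ i < j ∧ (a,b,c) ∈ c2C)

/-- The relations `R`, encoded as the words `u * v⁻¹` for each relation `u = v`. -/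
inductive Rel (n : ℕ) : FG n → Prop
  | cpt {i j k : ℕ} (hij : Idx2 n i j) (hk : Idx n k) :
      Rel n (P n i j * T n k * (T n k * P n i j)⁻¹)
  | ctt {i j : ℕ} (hi : Idx n i) (hj : Idx n j) :
      Rel n (T n i * T n j * (T n j * T n i)⁻¹)
  | cxt {i j k : ℕ} (hij : Idx2 n i j) (hk : Idx n k) (hne : k ≠ i) :
      Rel n (X n i j * T n k * (T n k * X n i j)⁻¹)
  | cyt {i j k : ℕ} (hij : Idx2 n i j) (hk : Idx n k) (hne : k ≠ j) :
      Rel n (Y n i j * T n k * (T n k * Y n i j)⁻¹)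
  | c1 (a b : Sym) {i j k l : ℕ} (hi : Idx n i) (hj : Idx n j) (hk : Idx n k)
      (hl : Idx n l) (hc : cyc4 i j k l) :
      Rel n (gsym n a i j * gsym n b k l * (gsym n b k l * gsym n a i j)⁻¹)
  | c2 (a b c : Sym) {i j k : ℕ} (hi : Idx n i) (hj : Idx n j) (hk : Idx n k)
      (h : C2ok i j k a b c) :
      Rel n (gsym n a i j * (gsym n b i k * gsym n c j k) *
             (gsym n b i k * gsym n c j k * gsym n a i j)⁻¹)
  | c3 (a b : Sym) {i j k l : ℕ} (hi : Idx n i) (hj : Idx n j) (hk : Idx n k)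
      (hl : Idx n l) (hc : cyc4 i j k l) :
      Rel n (gsym n a i k * (P n j k * gsym n b j l * (P n j k)⁻¹) *
             (P n j k * gsym n b j l * (P n j k)⁻¹ * gsym n a i k)⁻¹)
  | mx {i j : ℕ} (hij : Idx2 n i j) :
      Rel n (X n i j * P n i j * T n i * (P n i j * T n i * X n i j)⁻¹)
  | my {i j : ℕ} (hij : Idx2 n i j) :
      Rel n (Y n i j * P n i j * T n j * (P n i j * T n j * Y n i j)⁻¹)

/-- The presented group `G = ⟨S ∣ R⟩`. -/
abbrev GG (n : ℕ) := FG n ⧸ Subgroup.normalClosure {w : FG n | Rel n w}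

/-- The quotient homomorphism `π : F → G`. -/
def piG (n : ℕ) : FG n →* GG n := QuotientGroup.mk' _

/-- The map defining `Φ_{σ_m}` on generators. -/
def phiSigmaMap (n m : ℕ) : Gen n → FG n
  | Gen.pair s i j _ =>
      if i = m ∧ j = m + 1 then
        match s with
        | Sym.p => P n m (m+1)
        | Sym.x => (T n (m+1))⁻¹ * Y n m (m+1) * T n (m+1)
        | Sym.y => X n m (m+1)
      else if i = m then gsym n s (m+1) j
      else if j = m then gsym n s (m+1) i
      else if i = m + 1 then P n m (m+1) * gsym n s m j * (P n m (m+1))⁻¹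
      else if j = m + 1 then P n m (m+1) * gsym n s m i * (P n m (m+1))⁻¹
      else gsym n s i j
  | Gen.t k _ =>
      if k = m then T n (m+1) else if k = m + 1 then T n m else T n k

/-- `Φ_{σ_m} : F → F`. -/
def phiSigma (n m : ℕ) : FG n →* FG n := FreeGroup.lift (phiSigmaMap n m)

/-- The map defining `Ψ_{σ_m}` on generators. -/
def psiSigmaMap (n m : ℕ) : Gen n → FG n
  | Gen.pair s i j _ =>
      if i = m ∧ j = m + 1 then
        match s with
        | Sym.p => P n m (m+1)
        | Sym.x => Y n m (m+1)
        | Sym.y => T n m * X n m (m+1) * (T n m)⁻¹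
      else if i = m then (P n m (m+1))⁻¹ * gsym n s (m+1) j * P n m (m+1)
      else if j = m then (P n m (m+1))⁻¹ * gsym n s (m+1) i * P n m (m+1)
      else if i = m + 1 then gsym n s m j
      else if j = m + 1 then gsym n s m i
      else gsym n s i j
  | Gen.t k _ =>
      if k = m then T n (m+1) else if k = m + 1 then T n m else T n k

/-- `Ψ_{σ_m} : F → F`. -/
def psiSigma (n m : ℕ) : FG n →* FG n := FreeGroup.lift (psiSigmaMap n m)

/-- The map defining `Φ_{τ_m}` on generators. -/
def phiTauMap (n m : ℕ) : Gen n → FG n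
  | Gen.pair s i j _ =>
      match s with
      | Sym.p => P n i j
      | Sym.x => if m = i then (X n i j)⁻¹ * P n i j else X n i j
      | Sym.y => if m = j then (Y n i j)⁻¹ * P n i j else Y n i j
  | Gen.t k _ => T n k

/-- `Φ_{τ_m} : F → F`. -/
def phiTau (n m : ℕ) : FG n →* FG n := FreeGroup.lift (phiTauMap n m)

/-- The map defining `Ψ_{τ_m}` on generators. -/
def psiTauMap (n m : ℕ) : Gen n → FG n
  | Gen.pair s i j _ =>
      match s with
      | Sym.p => P n i j
      | Sym.x => if m = i then P n i j * (X n i j)⁻¹ else X n i j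
      | Sym.y => if m = j then P n i j * (Y n i j)⁻¹ else Y n i j
  | Gen.t k _ => T n k

/-- `Ψ_{τ_m} : F → F`. -/
def psiTau (n m : ℕ) : FG n →* FG n := FreeGroup.lift (psiTauMap n m)

/-! The relation (C2) for `(x,p,p)` on the triple `(k,i,j)` and for `(x,x,p)` on `(i,j,k)` say
that `x_ik` commutes with `p_jk p_ij` and that `x_ij` commutes with `x_ik p_jk`; the identity is
obtained by moving `p_jk p_ij` past `x_ik`, then `x_ij` past `x_ik p_jk`. -/

theorem gsym_comm (n : ℕ) (s : Sym) (i j : ℕ) : gsym n s j i = gsym n s i j := by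
  simp [gsym, min_comm, max_comm]

theorem piG_eq_of_rel {n : ℕ} {u v : FG n} (h : Rel n (u * v⁻¹)) : piG n u = piG n v := by
  rw [← mul_inv_eq_one, ← map_inv, ← map_mul]
  exact (QuotientGroup.eq_one_iff _).mpr (Subgroup.subset_normalClosure h)

theorem conj_mul_eq_of_commute {G : Type*} [Group G] {a b c d : G} (hb : Commute b (d * a))
    (hc : Commute c (b * d)) : a * b * a⁻¹ * c = d⁻¹ * c * b * d :=
  calc a * b * a⁻¹ * c = d⁻¹ * (d * a * b) * (a⁻¹ * c) := by group
    _ = d⁻¹ * (b * (d * a)) * (a⁻¹ * c) := by rw [hb.eq]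
    _ = d⁻¹ * (b * d * c) := by group
    _ = d⁻¹ * (c * (b * d)) := by rw [hc.eq]
    _ = d⁻¹ * c * b * d := by group

section Triple

variable {n i j k : ℕ} (h : 1 ≤ i ∧ i < j ∧ j < k ∧ k ≤ n)
include h

theorem idx_of_lt_of_lt : Idx n i ∧ Idx n j ∧ Idx n k := by
  unfold Idx
  omega

theorem commute_x_p_p : Commute (piG n (X n i k)) (piG n (P n j k * P n i j)) := by
  obtain ⟨hi, hj, hk⟩ := idx_of_lt_of_lt h
  have hc2 : C2ok k i j Sym.x Sym.p Sym.p := Or.inr (Or.inl ⟨h.2.1, h.2.2.1, by decide⟩)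
  have := piG_eq_of_rel (Rel.c2 Sym.x Sym.p Sym.p hk hi hj hc2)
  rwa [gsym_comm n Sym.x i k, gsym_comm n Sym.p j k] at this

theorem commute_x_x_p : Commute (piG n (X n i j)) (piG n (X n i k * P n j k)) :=
  let ⟨hi, hj, hk⟩ := idx_of_lt_of_lt h
  piG_eq_of_rel (Rel.c2 Sym.x Sym.x Sym.p hi hj hk (Or.inl ⟨h.2.1, h.2.2.1, by decide⟩))

end Triple

theorem stmt11_general (n : ℕ) (i j k : ℕ)
    (h : 1 ≤ i ∧ i < j ∧ j < k ∧ k ≤ n) :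
    piG n (P n i j * X n i k * (P n i j)⁻¹ * X n i j) =
    piG n ((P n j k)⁻¹ * X n i j * X n i k * P n j k) := by
  have hb := commute_x_p_p h
  have hc := commute_x_x_p h
  simp only [map_mul, map_inv] at hb hc ⊢
  exact conj_mul_eq_of_commute hb hc

/-- STATEMENT 11: For `1 ≤ i < j < k ≤ n`, in `G`:
`p_ij x_ik p_ij⁻¹ x_ij =_R p_jk⁻¹ x_ij x_ik p_jk`. -/
theorem stmt11 (n : ℕ) (hn : 2 ≤ n) (i j k : ℕ)
    (h : 1 ≤ i ∧ i < j ∧ j < k ∧ k ≤ n) :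
    piG n (P n i j * X n i k * (P n i j)⁻¹ * X n i j) =
    piG n ((P n j k)⁻¹ * X n i j * X n i k * P n j k) :=
  stmt11_general n i j k h

end PureHilden
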